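/- arXiv:1104.1595 — 2 statements merged into one kernel-verified Lean document; each statement's English description precedes it below -/
import Mathlib

section
/- Let μ, ν ∈ ℝ^d with ν ≠ 0 and let μ lie in the hyperplane through ν orthogonal to a unit vector ŝ with ⟨ŝ, ν⟩ > 0 (i.e. ⟨ŝ, μ⟩ = ⟨ŝ, ν⟩). Then there exist positive constants c₉, c₁₀ (depending only on ν, ŝ, d) such that for all n, k ∈ ℕ: ‖nμ − kν‖ ≥ n·c₉·‖μ − ν‖ + |n − k|·c₁₀·‖ν‖. -/
/-!
Put `z = n • μ - k • ν` and `a = ⟪ŝ, ν⟫ > 0`. Pairing with `ŝ` gives `⟪ŝ, z⟫ = (n - k) a`, so the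
longitudinal part is controlled: `|n - k| a ≤ ‖z‖`. Writing `n • (μ - ν) = z - (n - k) • ν`, the
transverse part satisfies `n ‖μ - ν‖ ≤ ‖z‖ + |n - k| ‖ν‖ ≤ (1 + ‖ν‖ / a) ‖z‖`. Each of the two
terms of the claimed lower bound is then at most `‖z‖ / 2`.
-/

open scoped RealInnerProductSpace

namespace EquiDecayHyperplane

variable {E : Type*} [NormedAddCommGroup E] [InnerProductSpace ℝ E]

theorem norm_pos_of_inner_pos {s ν : E} (h : 0 < ⟪s, ν⟫) : 0 < ‖ν‖ :=
  norm_pos_iff.mpr (by rintro rfl; simp at h)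

theorem abs_sub_mul_abs_inner_le {s μ ν : E} (hμ : ⟪s, μ⟫ = ⟪s, ν⟫) (x y : ℝ) :
    |x - y| * |⟪s, ν⟫| ≤ ‖s‖ * ‖x • μ - y • ν‖ := by
  have hpair : ⟪s, x • μ - y • ν⟫ = (x - y) * ⟪s, ν⟫ := by
    rw [inner_sub_right, real_inner_smul_right, real_inner_smul_right, hμ]
    ring
  rw [← abs_mul, ← hpair]
  exact abs_real_inner_le_norm s _

theorem abs_mul_norm_sub_le (μ ν : E) (x y : ℝ) :
    |x| * ‖μ - ν‖ ≤ ‖x • μ - y • ν‖ + |x - y| * ‖ν‖ := by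
  have hsplit : x • (μ - ν) = (x • μ - y • ν) - (x - y) • ν := by
    rw [smul_sub, sub_smul]
    abel
  calc |x| * ‖μ - ν‖ = ‖x • (μ - ν)‖ := (norm_smul x _).symm
    _ ≤ ‖x • μ - y • ν‖ + ‖(x - y) • ν‖ := hsplit ▸ norm_sub_le _ _
    _ = ‖x • μ - y • ν‖ + |x - y| * ‖ν‖ := by rw [norm_smul, Real.norm_eq_abs]

theorem transverse_add_longitudinal_le {s μ ν : E} (hs : ‖s‖ ≤ 1) (ha : 0 < ⟪s, ν⟫)
    (hμ : ⟪s, μ⟫ = ⟪s, ν⟫) {x : ℝ} (hx : 0 ≤ x) (y : ℝ) :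
    x * (⟪s, ν⟫ / (2 * (‖ν‖ + ⟪s, ν⟫))) * ‖μ - ν‖ +
        |x - y| * (⟪s, ν⟫ / (2 * ‖ν‖)) * ‖ν‖ ≤ ‖x • μ - y • ν‖ := by
  set a := ⟪s, ν⟫
  set t := ‖x • μ - y • ν‖
  have hνpos : 0 < ‖ν‖ := norm_pos_of_inner_pos ha
  have hlong : |x - y| * a ≤ t := by
    have := abs_sub_mul_abs_inner_le hμ x y
    rw [abs_of_pos ha] at this
    exact this.trans (mul_le_of_le_one_left (norm_nonneg _) hs)
  have htrans : x * ‖μ - ν‖ ≤ t + |x - y| * ‖ν‖ := by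
    simpa only [abs_of_nonneg hx] using abs_mul_norm_sub_le μ ν x y
  have htrans' : x * ‖μ - ν‖ * a ≤ t * (‖ν‖ + a) := by
    nlinarith [mul_le_mul_of_nonneg_right htrans ha.le, mul_le_mul_of_nonneg_right hlong hνpos.le]
  have hfirst : x * (a / (2 * (‖ν‖ + a))) * ‖μ - ν‖ ≤ t / 2 := by
    rw [show x * (a / (2 * (‖ν‖ + a))) * ‖μ - ν‖ = x * ‖μ - ν‖ * a / (2 * (‖ν‖ + a)) by ring,
      div_le_iff₀ (by positivity)]
    linarith
  have hsecond : |x - y| * (a / (2 * ‖ν‖)) * ‖ν‖ = |x - y| * a / 2 := by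
    field_simp
  linarith

end EquiDecayHyperplane

open EquiDecayHyperplane in
theorem stmt17_general {d : ℕ} (ν shat : EuclideanSpace ℝ (Fin d))
    (hshat : ‖shat‖ = 1) (hsν : 0 < (inner ℝ shat ν : ℝ)) :
    ∃ c₉ > (0 : ℝ), ∃ c₁₀ > (0 : ℝ),
      ∀ μ : EuclideanSpace ℝ (Fin d), (inner ℝ shat μ : ℝ) = (inner ℝ shat ν : ℝ) →
        ∀ n k : ℕ,
          (n : ℝ) * c₉ * ‖μ - ν‖ + |(n : ℝ) - (k : ℝ)| * c₁₀ * ‖ν‖ ≤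
            ‖(n : ℝ) • μ - (k : ℝ) • ν‖ := by
  have hνpos : 0 < ‖ν‖ := norm_pos_of_inner_pos hsν
  exact ⟨_, by positivity, _, by positivity,
    fun μ hμ n k => transverse_add_longitudinal_le hshat.le hsν hμ n.cast_nonneg k⟩

theorem stmt17 {d : ℕ} (ν shat : EuclideanSpace ℝ (Fin d))
    (hν : ν ≠ 0) (hshat : ‖shat‖ = 1) (hsν : 0 < (inner ℝ shat ν : ℝ)) :
    ∃ c₉ > (0 : ℝ), ∃ c₁₀ > (0 : ℝ),
      ∀ μ : EuclideanSpace ℝ (Fin d), (inner ℝ shat μ : ℝ) = (inner ℝ shat ν : ℝ) →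
        ∀ n k : ℕ,
          (n : ℝ) * c₉ * ‖μ - ν‖ + |(n : ℝ) - (k : ℝ)| * c₁₀ * ‖ν‖ ≤
            ‖(n : ℝ) • μ - (k : ℝ) • ν‖ :=
  stmt17_general ν shat hshat hsν
end

section
/- Let a ∈ (0, ∞) and α ∈ (0, 1/2). Then Σ_{k ∈ ℕ, |k − n| ≥ n^{1/2+α}} e^{−a·min((n−k)²/k, |n−k|)} ≤ e^{−c·n^{2α}} for some constant c > 0 and all sufficiently large n. -/
/-!
Put `X = n ^ (2α)`. A step count `k` with `|k - n| ≥ n ^ (1/2 + α)` has `(n - k)² ≥ n X`,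
hence `min ((n - k)² / k, |n - k|) ≥ (X + max 0 (k - 2n)) / 4`. So every summand is at most
`exp (-a X / 4)` times a factor that is `1` for `k ≤ 2n` and decays geometrically beyond, and
these factors sum to `O(n)`. Since `log n = o(X)`, the factor `n` costs only half the exponent.
-/

open Filter Real

lemma le_min_sq_div_abs_of_mul_le_sq {N K X : ℝ} (hK : 0 < K) (hX : 0 ≤ X) (hXN : X ≤ N)
    (hsq : N * X ≤ (N - K) ^ 2) :
    (X + max 0 (K - 2 * N)) / 4 ≤ min ((N - K) ^ 2 / K) |N - K| := by
  rcases le_or_gt K (2 * N) with hsmall | hlarge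
  · have hX_abs : X ≤ |N - K| := by
      simpa [abs_of_nonneg hX] using sq_le_sq.1 (show X ^ 2 ≤ (N - K) ^ 2 by nlinarith)
    rw [max_eq_left (by linarith)]
    refine le_min ?_ (by linarith)
    rw [div_le_div_iff₀ (by norm_num) hK]
    nlinarith
  · rw [max_eq_right (by linarith), abs_of_neg (by linarith)]
    refine le_min ?_ (by linarith)
    rw [div_le_div_iff₀ (by norm_num) hK]
    nlinarith

lemma exp_neg_mul_min_le_of_rpow_le_abs {a α N K : ℝ} (ha : 0 ≤ a) (hα : α ≤ 1 / 2)
    (hN : 1 ≤ N) (hK : 0 < K) (hfar : N ^ (1 / 2 + α) ≤ |K - N|) :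
    exp (-a * min ((N - K) ^ 2 / K) |N - K|) ≤
      exp (-(a / 4) * N ^ (2 * α)) * exp (-(a / 4) * max 0 (K - 2 * N)) := by
  have hXN : N ^ (2 * α) ≤ N := by
    simpa using rpow_le_rpow_of_exponent_le hN (by linarith : 2 * α ≤ 1)
  have hsq : N * N ^ (2 * α) ≤ (N - K) ^ 2 := by
    have hsplit : (N ^ (1 / 2 + α)) ^ 2 = N * N ^ (2 * α) := by
      rw [← rpow_natCast, ← rpow_mul (by linarith),
        show (1 / 2 + α) * ((2 : ℕ) : ℝ) = 1 + 2 * α by push_cast; ring, rpow_add (by linarith),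
        rpow_one]
    rw [← hsplit, ← sq_abs (N - K), abs_sub_comm]
    exact pow_le_pow_left₀ (by positivity) hfar 2
  have hmin := le_min_sq_div_abs_of_mul_le_sq hK (by positivity) hXN hsq
  rw [← exp_add, exp_le_exp]
  nlinarith [mul_le_mul_of_nonneg_left hmin ha]

lemma ite_exp_neg_mul_min_le {a α : ℝ} (ha : 0 ≤ a) (hα : α ≤ 1 / 2) {n : ℕ} (hn : 1 ≤ n)
    (k : ℕ) :
    (if 1 ≤ k ∧ (n : ℝ) ^ ((1 : ℝ) / 2 + α) ≤ |(k : ℝ) - (n : ℝ)| then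
        exp (-a * min (((n : ℝ) - (k : ℝ)) ^ 2 / (k : ℝ)) |(n : ℝ) - (k : ℝ)|) else 0) ≤
      exp (-(a / 4) * (n : ℝ) ^ (2 * α)) * exp (-(a / 4) * max 0 ((k : ℝ) - (2 * n : ℕ))) := by
  split_ifs with hk
  · push_cast
    exact exp_neg_mul_min_le_of_rpow_le_abs ha hα (by exact_mod_cast hn) (by exact_mod_cast hk.1)
      hk.2
  · positivity

lemma exp_neg_mul_max_sub_add (b : ℝ) (m k : ℕ) :
    exp (-b * max 0 (((k + m : ℕ) : ℝ) - m)) = exp (-b) ^ k := by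
  rw [Nat.cast_add, add_sub_cancel_right, max_eq_right k.cast_nonneg, ← exp_nat_mul, mul_comm]

lemma summable_exp_neg_mul_max_sub {b : ℝ} (hb : 0 < b) (m : ℕ) :
    Summable (fun k : ℕ => exp (-b * max 0 ((k : ℝ) - m))) := by
  rw [← summable_nat_add_iff m]
  simp only [exp_neg_mul_max_sub_add]
  exact summable_geometric_of_lt_one (exp_pos _).le (exp_lt_one_iff.2 (by linarith))

lemma tsum_exp_neg_mul_max_sub_le {b : ℝ} (hb : 0 < b) (m : ℕ) :
    ∑' k : ℕ, exp (-b * max 0 ((k : ℝ) - m)) ≤ m + (1 - exp (-b))⁻¹ := by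
  have hr : exp (-b) < 1 := exp_lt_one_iff.2 (by linarith)
  rw [← (summable_exp_neg_mul_max_sub hb m).sum_add_tsum_nat_add m]
  simp only [exp_neg_mul_max_sub_add, tsum_geometric_of_lt_one (exp_pos _).le hr]
  gcongr
  calc ∑ i ∈ Finset.range m, exp (-b * max 0 ((i : ℝ) - m))
      ≤ ∑ _i ∈ Finset.range m, (1 : ℝ) :=
        Finset.sum_le_sum fun i _ => exp_le_one_iff.2 <|
          mul_nonpos_of_nonpos_of_nonneg (by linarith) (le_max_left _ _)
    _ = m := by simp

lemma eventually_mul_le_exp_mul_rpow (D : ℝ) {b β : ℝ} (hb : 0 < b) (hβ : 0 < β) :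
    ∀ᶠ x : ℝ in atTop, D * x ≤ exp (b * x ^ β) := by
  have hlittle := ((isLittleO_rpow_exp_pos_mul_atTop β⁻¹ hb).comp_tendsto
    (tendsto_rpow_atTop hβ)).const_mul_left D
  filter_upwards [hlittle.bound zero_lt_one, eventually_ge_atTop 0] with x hx hx0
  simp only [Function.comp_apply] at hx
  rw [← rpow_mul hx0, mul_inv_cancel₀ hβ.ne', rpow_one, one_mul,
    norm_of_nonneg (exp_pos _).le] at hx
  exact (le_abs_self _).trans hx

theorem stmt19 (a α : ℝ) (ha : 0 < a) (hα : 0 < α) (hα2 : α < 1 / 2) :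
    ∃ c > (0 : ℝ), ∀ᶠ n : ℕ in Filter.atTop,
      (∑' k : ℕ,
          if 1 ≤ k ∧ (n : ℝ) ^ ((1 : ℝ) / 2 + α) ≤ |(k : ℝ) - (n : ℝ)| then
            Real.exp (-a * min (((n : ℝ) - (k : ℝ)) ^ 2 / (k : ℝ)) |(n : ℝ) - (k : ℝ)|)
          else 0) ≤
        Real.exp (-c * (n : ℝ) ^ (2 * α)) := by
  set C := (1 - exp (-(a / 4)))⁻¹
  have hC : 0 ≤ C := inv_nonneg.2 (sub_nonneg.2 (exp_le_one_iff.2 (by linarith)))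
  refine ⟨a / 8, by positivity, ?_⟩
  filter_upwards [tendsto_natCast_atTop_atTop.eventually (eventually_mul_le_exp_mul_rpow (2 + C)
    (by positivity : 0 < a / 8) (by positivity : 0 < 2 * α)), eventually_ge_atTop 1]
    with n hgrow hn
  set X := (n : ℝ) ^ (2 * α)
  have hle := ite_exp_neg_mul_min_le ha.le hα2.le hn
  have hg := (summable_exp_neg_mul_max_sub (by positivity : 0 < a / 4) (2 * n)).mul_left
    (exp (-(a / 4) * X))
  have htail : ∑' k : ℕ, exp (-(a / 4) * max 0 ((k : ℝ) - (2 * n : ℕ))) ≤ (2 + C) * n := by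
    refine (tsum_exp_neg_mul_max_sub_le (by positivity) (2 * n)).trans ?_
    have hn' : (1 : ℝ) ≤ n := by exact_mod_cast hn
    push_cast
    nlinarith
  calc _ ≤ ∑' k : ℕ, exp (-(a / 4) * X) * exp (-(a / 4) * max 0 ((k : ℝ) - (2 * n : ℕ))) :=
        Summable.tsum_le_tsum hle (hg.of_nonneg_of_le (fun _ => by positivity) hle) hg
    _ = exp (-(a / 4) * X) * ∑' k : ℕ, exp (-(a / 4) * max 0 ((k : ℝ) - (2 * n : ℕ))) :=
        tsum_mul_left
    _ ≤ exp (-(a / 4) * X) * exp (a / 8 * X) := by gcongr; exact htail.trans hgrow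
    _ = exp (-(a / 8) * X) := by rw [← exp_add]; ring_nf
end
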